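/- Subadditivity of the finite-volume conductivity functional: with ν̄(ρ,Λ,p) defined as the infimum over v ∈ ℓ_{p,Λ⁺} + F_0(Λ⁻) of (1/(2χ(ρ)|Λ|)) Σ_{b∈Λ̄*} E_ρ[(1/2) c_b (π_b v)²], for any partition of a finite set Λ ⊂ Z^d into disjoint subsets Λ = Λ_1 ⊔ ⋯ ⊔ Λ_m one has ν̄(ρ,Λ,p) ≤ Σ_{i=1}^m (|Λ_i|/|Λ|) ν̄(ρ,Λ_i,p). In particular, for triadic cubes □_n = (−3^n/2, 3^n/2)^d ∩ Z^d, the sequence n ↦ ν̄(ρ,□_n,p) is nonincreasing. -/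

import Mathlib

open MeasureTheory

/-- `μ` is the Bernoulli(ρ) product measure on `{0,1}^{ℤᵈ}`. -/
def IsBernoulliProduct {d : ℕ} (ρ : ℝ) (μ : Measure ((Fin d → ℤ) → Bool)) : Prop :=
  IsProbabilityMeasure μ ∧
    ∀ (s : Finset (Fin d → ℤ)) (b : (Fin d → ℤ) → Bool),
      μ {η | ∀ x ∈ s, η x = b x} = ∏ x ∈ s, ENNReal.ofReal (if b x then ρ else 1 - ρ)

/-- The `i`-th coordinate unit vector of `ℤᵈ`. -/
def unitVec (d : ℕ) (i : Fin d) : Fin d → ℤ := fun j => if j = i then 1 else 0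

/-- The interior `Λ⁻ = Λ \ ∂Λ`. -/
def interiorF {d : ℕ} (Λ : Finset (Fin d → ℤ)) : Finset (Fin d → ℤ) :=
  Λ.filter fun x => ∀ i : Fin d, x + unitVec d i ∈ Λ ∧ x - unitVec d i ∈ Λ

/-- The enlarged set `Λ⁺ = Λ ∪ ⋃_{i=1}^d (Λ + e_i)`. -/
def plusF {d : ℕ} (Λ : Finset (Fin d → ℤ)) : Finset (Fin d → ℤ) :=
  Λ ∪ Finset.univ.biUnion fun i : Fin d => Λ.image (· + unitVec d i)

/-- The exchange `η^{x,y}`. -/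
def exchange {d : ℕ} (x y : Fin d → ℤ) (η : (Fin d → ℤ) → Bool) : (Fin d → ℤ) → Bool :=
  fun z => if z = x then η y else if z = y then η x else η z

/-- The affine function `ℓ_{p,Λ⁺}(η) = Σ_{x∈Λ⁺} (p·x) η_x`. -/
def affineFn {d : ℕ} (Λplus : Finset (Fin d → ℤ)) (p : Fin d → ℝ) :
    ((Fin d → ℤ) → Bool) → ℝ :=
  fun η => ∑ x ∈ Λplus, (∑ i, p i * (x i : ℝ)) * (if η x then (1 : ℝ) else 0)

/-- The normalized Dirichlet energy
`(1/(2χ(ρ)|Λ|)) Σ_{b∈Λ̄*} E_ρ[(1/2) c_b (π_b v)²]`, with the enlarged bond set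
`Λ̄* = {{x, x+e_i} : x ∈ Λ, 1 ≤ i ≤ d}` indexed by pairs `(x, i)`, `x ∈ Λ`. -/
noncomputable def dirichletEnergy {d : ℕ} (ρ : ℝ) (μ : Measure ((Fin d → ℤ) → Bool))
    (c : (Fin d → ℤ) → Fin d → ((Fin d → ℤ) → Bool) → ℝ)
    (Λ : Finset (Fin d → ℤ)) (v : ((Fin d → ℤ) → Bool) → ℝ) : ℝ :=
  (1 / (2 * (ρ * (1 - ρ)) * (Λ.card : ℝ))) *
    ∑ x ∈ Λ, ∑ i : Fin d,
      ∫ η, (1 / 2) * c x i η * (v (exchange x (x + unitVec d i) η) - v η) ^ 2 ∂μ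

/-- `ν̄(ρ,Λ,p) = inf_{v ∈ ℓ_{p,Λ⁺} + F₀(Λ⁻)} (1/(2χ(ρ)|Λ|)) Σ_{b∈Λ̄*} E_ρ[(1/2)c_b(π_b v)²]`. -/
noncomputable def nubar {d : ℕ} (ρ : ℝ) (μ : Measure ((Fin d → ℤ) → Bool))
    (c : (Fin d → ℤ) → Fin d → ((Fin d → ℤ) → Bool) → ℝ)
    (Λ : Finset (Fin d → ℤ)) (p : Fin d → ℝ) : ℝ :=
  sInf {r : ℝ | ∃ g : ((Fin d → ℤ) → Bool) → ℝ,
    (∀ η η', (∀ x ∈ interiorF Λ, η x = η' x) → g η = g η') ∧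
    r = dirichletEnergy ρ μ c Λ (fun η => affineFn (plusF Λ) p η + g η)}

/-- The discrete triadic cube `□_n = (−3ⁿ/2, 3ⁿ/2)^d ∩ ℤ^d`. -/
noncomputable def triadicCubeF (d n : ℕ) : Finset (Fin d → ℤ) :=
  Fintype.piFinset fun _ : Fin d =>
    (Finset.Icc (-(3 ^ n : ℤ)) (3 ^ n : ℤ)).filter fun k =>
      -(3 ^ n : ℤ) < 2 * k ∧ 2 * k < (3 ^ n : ℤ)

/-!
Gluing near-optimal local correctors: if each `g_k` depends only on the interior of `Λ_k`, then
`ℓ_{p,Λ⁺} + ∑ g_k` is admissible for `Λ`. Across a bond `{x, x + e_i}` with `x ∈ Λ_k` every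
`g_j`, `j ≠ k`, is blind to the exchange, and the affine parts over `Λ⁺` and `Λ_k⁺` have the
same increment `p_i (η_x - η_{x+e_i})`; hence the energy of the glued function is the
`|Λ_k|/|Λ|`-weighted average of the local energies. For the triadic cubes, `□_{n+1}` is the
disjoint union of `3^d` translates of `□_n`, and `ν̄` is translation invariant: the Bernoulli
product measure is shift invariant (it is determined by its values on cylinders) and the rates
are homogeneous.
-/

section PointCylinders

variable {ι α : Type*}

def pointCylinders (ι α : Type*) : Set (Set (ι → α)) :=
  {A | ∃ (s : Finset ι) (b : ι → α), A = {η | ∀ x ∈ s, η x = b x}}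

theorem isPiSystem_pointCylinders : IsPiSystem (pointCylinders ι α) := by
  classical
  rintro _ ⟨s, b, rfl⟩ _ ⟨t, b', rfl⟩ ⟨η₀, hs, ht⟩
  refine ⟨s ∪ t, η₀, Set.ext fun η => ?_⟩
  simp only [Set.mem_inter_iff, Set.mem_ofPred_eq, Finset.mem_union]
  constructor
  · rintro ⟨h, h'⟩ x (hx | hx)
    · exact (h x hx).trans (hs x hx).symm
    · exact (h' x hx).trans (ht x hx).symm
  · intro h
    exact ⟨fun x hx => (h x (.inl hx)).trans (hs x hx),
      fun x hx => (h x (.inr hx)).trans (ht x hx)⟩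

variable [MeasurableSpace α] [MeasurableSingletonClass α]

theorem measurableSet_of_mem_pointCylinders {A : Set (ι → α)} (hA : A ∈ pointCylinders ι α) :
    MeasurableSet A := by
  obtain ⟨s, b, rfl⟩ := hA
  simp only [Set.ofPred_forall]
  exact .biInter s.countable_toSet fun x _ =>
    (measurableSet_singleton (b x)).preimage (measurable_pi_apply x)

theorem generateFrom_pointCylinders [Countable α] :
    MeasurableSpace.generateFrom (pointCylinders ι α) = MeasurableSpace.pi := by
  refine le_antisymm
    (MeasurableSpace.generateFrom_le fun _ => measurableSet_of_mem_pointCylinders) ?_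
  refine iSup_le fun x => Measurable.comap_le ?_
  refine @measurable_to_countable' _ _ _ _ (_) _ fun a => ?_
  exact MeasurableSpace.measurableSet_generateFrom ⟨{x}, fun _ => a, by ext; simp⟩

end PointCylinders

section Bernoulli

variable {d : ℕ} {ρ : ℝ} {μ ν : Measure ((Fin d → ℤ) → Bool)}

theorem IsBernoulliProduct.unique (hμ : IsBernoulliProduct ρ μ) (hν : IsBernoulliProduct ρ ν) :
    μ = ν := by
  have := hμ.1
  refine ext_of_generate_finite _ generateFrom_pointCylinders.symm isPiSystem_pointCylinders
    ?_ (by simp [hν.1.measure_univ])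
  rintro _ ⟨s, b, rfl⟩
  rw [hμ.2, hν.2]

def shiftEquiv {G α : Type*} [AddGroup G] [MeasurableSpace α] (z : G) : (G → α) ≃ᵐ (G → α) where
  toFun η y := η (z + y)
  invFun η y := η (-z + y)
  left_inv η := by simp
  right_inv η := by simp
  measurable_toFun := measurable_pi_lambda _ fun _ => measurable_pi_apply _
  measurable_invFun := measurable_pi_lambda _ fun _ => measurable_pi_apply _

@[simp]
theorem shiftEquiv_apply {G α : Type*} [AddGroup G] [MeasurableSpace α] (z : G) (η : G → α)
    (y : G) : shiftEquiv z η y = η (z + y) := rfl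

theorem IsBernoulliProduct.map_shiftEquiv (hμ : IsBernoulliProduct ρ μ) (z : Fin d → ℤ) :
    IsBernoulliProduct ρ (μ.map (shiftEquiv z)) := by
  have := hμ.1
  refine ⟨Measure.isProbabilityMeasure_map (shiftEquiv z).measurable.aemeasurable,
    fun s b => ?_⟩
  have hpre : shiftEquiv z ⁻¹' {η | ∀ x ∈ s, η x = b x} =
      {η | ∀ y ∈ s.image (z + ·), η y = b (-z + y)} := by
    ext η
    simp only [Set.mem_preimage, Set.mem_ofPred_eq, Finset.forall_mem_image, shiftEquiv_apply,
      neg_add_cancel_left]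
  rw [MeasurableEquiv.map_apply, hpre, hμ.2,
    Finset.prod_image fun _ _ _ _ => add_left_cancel]
  simp

theorem IsBernoulliProduct.measurePreserving_shiftEquiv (hμ : IsBernoulliProduct ρ μ)
    (z : Fin d → ℤ) : MeasurePreserving (shiftEquiv z) μ μ :=
  ⟨(shiftEquiv z).measurable, (hμ.map_shiftEquiv z).unique hμ⟩

end Bernoulli

section Lattice

variable {d : ℕ}

theorem ne_add_unitVec (x : Fin d → ℤ) (i : Fin d) : x ≠ x + unitVec d i := by
  simp [funext_iff, unitVec]

theorem mem_plusF_of_mem {Λ : Finset (Fin d → ℤ)} {x : Fin d → ℤ} (hx : x ∈ Λ) :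
    x ∈ plusF Λ :=
  Finset.mem_union_left _ hx

theorem add_unitVec_mem_plusF {Λ : Finset (Fin d → ℤ)} {x : Fin d → ℤ} (hx : x ∈ Λ)
    (i : Fin d) : x + unitVec d i ∈ plusF Λ :=
  Finset.mem_union_right _ <|
    Finset.mem_biUnion.2 ⟨i, Finset.mem_univ i, Finset.mem_image_of_mem _ hx⟩

theorem interiorF_subset (Λ : Finset (Fin d → ℤ)) : interiorF Λ ⊆ Λ :=
  Finset.filter_subset _ _

theorem interiorF_mono {Λ Λ' : Finset (Fin d → ℤ)} (h : Λ ⊆ Λ') : interiorF Λ ⊆ interiorF Λ' :=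
  fun _ hx => by
    simp only [interiorF, Finset.mem_filter] at hx ⊢
    exact ⟨h hx.1, fun i => ⟨h (hx.2 i).1, h (hx.2 i).2⟩⟩

theorem add_unitVec_notMem_interiorF {Λ : Finset (Fin d → ℤ)} {x : Fin d → ℤ} (hx : x ∉ Λ)
    (i : Fin d) : x + unitVec d i ∉ interiorF Λ := fun h => by
  simp only [interiorF, Finset.mem_filter] at h
  exact hx (by simpa using (h.2 i).2)

theorem add_mem_interiorF_image {Λ : Finset (Fin d → ℤ)} {y : Fin d → ℤ}
    (hy : y ∈ interiorF Λ) (z : Fin d → ℤ) : z + y ∈ interiorF (Λ.image (z + ·)) := by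
  simp only [interiorF, Finset.mem_filter] at hy ⊢
  refine ⟨Finset.mem_image_of_mem _ hy.1, fun i => ⟨?_, ?_⟩⟩
  · rw [add_assoc]
    exact Finset.mem_image_of_mem _ (hy.2 i).1
  · rw [add_sub_assoc]
    exact Finset.mem_image_of_mem _ (hy.2 i).2

theorem DependsOn.comp_exchange {s : Set (Fin d → ℤ)} {β : Type*}
    {g : ((Fin d → ℤ) → Bool) → β} (hg : DependsOn g s) {x y : Fin d → ℤ} (hx : x ∉ s)
    (hy : y ∉ s) (η : (Fin d → ℤ) → Bool) : g (exchange x y η) = g η :=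
  hg fun z hz => by
    have hzx : z ≠ x := by rintro rfl; exact hx hz
    have hzy : z ≠ y := by rintro rfl; exact hy hz
    simp [exchange, hzx, hzy]

end Lattice

section BondGradient

variable {d : ℕ}

/-- `π_b v` for the bond `b = {x, x + e_i}`. -/
def bondDiff (x : Fin d → ℤ) (i : Fin d) (v : ((Fin d → ℤ) → Bool) → ℝ)
    (η : (Fin d → ℤ) → Bool) : ℝ :=
  v (exchange x (x + unitVec d i) η) - v η

theorem bondDiff_add (x : Fin d → ℤ) (i : Fin d) (v w : ((Fin d → ℤ) → Bool) → ℝ)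
    (η : (Fin d → ℤ) → Bool) :
    bondDiff x i (fun ξ => v ξ + w ξ) η = bondDiff x i v η + bondDiff x i w η := by
  simp only [bondDiff]
  ring

theorem bondDiff_sum {ι : Type*} (s : Finset ι) (x : Fin d → ℤ) (i : Fin d)
    (g : ι → ((Fin d → ℤ) → Bool) → ℝ) (η : (Fin d → ℤ) → Bool) :
    bondDiff x i (fun ξ => ∑ k ∈ s, g k ξ) η = ∑ k ∈ s, bondDiff x i (g k) η := by
  simp only [bondDiff, Finset.sum_sub_distrib]

theorem affineFn_exchange_sub {A : Finset (Fin d → ℤ)} (p : Fin d → ℝ) {x y : Fin d → ℤ}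
    (hx : x ∈ A) (hy : y ∈ A) (hxy : x ≠ y) (η : (Fin d → ℤ) → Bool) :
    affineFn A p (exchange x y η) - affineFn A p η =
      (∑ j, p j * (x j : ℝ) - ∑ j, p j * (y j : ℝ)) *
        ((if η y then 1 else 0) - (if η x then 1 else 0)) := by
  classical
  have hxyA : {x, y} ⊆ A := Finset.insert_subset hx (Finset.singleton_subset_iff.2 hy)
  have hfar : ∀ z ∈ A, z ∉ ({x, y} : Finset _) → exchange x y η z = η z := fun z _ hz => by
    simp only [Finset.mem_insert, Finset.mem_singleton, not_or] at hz
    simp [exchange, hz.1, hz.2]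
  rw [affineFn, affineFn, ← Finset.sum_sub_distrib,
    ← Finset.sum_subset hxyA fun z hzA hz => by rw [hfar z hzA hz, sub_self],
    Finset.sum_pair hxy]
  simp only [exchange, ↓reduceIte, if_neg hxy.symm]
  ring

theorem sum_mul_add_unitVec (p : Fin d → ℝ) (x : Fin d → ℤ) (i : Fin d) :
    ∑ j, p j * ((x + unitVec d i) j : ℝ) = ∑ j, p j * (x j : ℝ) + p i := by
  simp [unitVec, mul_add, Finset.sum_add_distrib]

theorem bondDiff_affineFn {A : Finset (Fin d → ℤ)} (p : Fin d → ℝ) {x : Fin d → ℤ} {i : Fin d}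
    (hx : x ∈ A) (hxi : x + unitVec d i ∈ A) (η : (Fin d → ℤ) → Bool) :
    bondDiff x i (affineFn A p) η =
      p i * ((if η x then 1 else 0) - (if η (x + unitVec d i) then 1 else 0)) := by
  rw [bondDiff, affineFn_exchange_sub p hx hxi (ne_add_unitVec x i), sum_mul_add_unitVec]
  ring

end BondGradient

section Nubar

variable {d : ℕ} {ρ : ℝ} {μ : Measure ((Fin d → ℤ) → Bool)}
  {c : (Fin d → ℤ) → Fin d → ((Fin d → ℤ) → Bool) → ℝ} {p : Fin d → ℝ}

theorem dirichletEnergy_eq (Λ : Finset (Fin d → ℤ)) (v : ((Fin d → ℤ) → Bool) → ℝ) :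
    dirichletEnergy ρ μ c Λ v = 1 / (2 * (ρ * (1 - ρ)) * Λ.card) *
      ∑ x ∈ Λ, ∑ i, ∫ η, 1 / 2 * c x i η * bondDiff x i v η ^ 2 ∂μ :=
  rfl

theorem dirichletEnergy_nonneg (hρ : ρ ∈ Set.Icc (0 : ℝ) 1) (hc : ∀ x i η, 0 ≤ c x i η)
    (Λ : Finset (Fin d → ℤ)) (v : ((Fin d → ℤ) → Bool) → ℝ) :
    0 ≤ dirichletEnergy ρ μ c Λ v := by
  have hχ : 0 ≤ ρ * (1 - ρ) := mul_nonneg hρ.1 (sub_nonneg.2 hρ.2)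
  rw [dirichletEnergy_eq]
  exact mul_nonneg (by positivity) <| Finset.sum_nonneg fun x _ => Finset.sum_nonneg fun i _ =>
    integral_nonneg fun η => by have := hc x i η; positivity

theorem nubar_le_dirichletEnergy (hρ : ρ ∈ Set.Icc (0 : ℝ) 1) (hc : ∀ x i η, 0 ≤ c x i η)
    {Λ : Finset (Fin d → ℤ)} {g : ((Fin d → ℤ) → Bool) → ℝ} (hg : DependsOn g (interiorF Λ)) :
    nubar ρ μ c Λ p ≤ dirichletEnergy ρ μ c Λ (fun η => affineFn (plusF Λ) p η + g η) :=
  csInf_le ⟨0, by rintro _ ⟨g, -, rfl⟩; exact dirichletEnergy_nonneg hρ hc Λ _⟩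
    ⟨g, fun _ _ h => hg h, rfl⟩

theorem exists_dirichletEnergy_lt_nubar_add (Λ : Finset (Fin d → ℤ)) {ε : ℝ} (hε : 0 < ε) :
    ∃ g : ((Fin d → ℤ) → Bool) → ℝ, DependsOn g (interiorF Λ) ∧
      dirichletEnergy ρ μ c Λ (fun η => affineFn (plusF Λ) p η + g η) < nubar ρ μ c Λ p + ε := by
  obtain ⟨_, ⟨g, hg, rfl⟩, hlt⟩ :=
    exists_lt_of_csInf_lt (by exact ⟨_, fun _ => 0, fun _ _ _ => rfl, rfl⟩)
      (lt_add_of_pos_right (nubar ρ μ c Λ p) hε)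
  exact ⟨g, fun _ _ h => hg _ _ h, hlt⟩

end Nubar

section Gluing

open Function

variable {d : ℕ} {ρ : ℝ} {μ : Measure ((Fin d → ℤ) → Bool)}
  {c : (Fin d → ℤ) → Fin d → ((Fin d → ℤ) → Bool) → ℝ} {p : Fin d → ℝ}
  {ι : Type*} [Fintype ι] {Λ : Finset (Fin d → ℤ)} {Λs : ι → Finset (Fin d → ℤ)}

theorem bondDiff_glue (hdisj : Pairwise (Disjoint on Λs)) (hcover : Λ = Finset.univ.biUnion Λs)
    {g : ι → ((Fin d → ℤ) → Bool) → ℝ} (hg : ∀ k, DependsOn (g k) (interiorF (Λs k)))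
    {k : ι} {x : Fin d → ℤ} (hx : x ∈ Λs k) (i : Fin d) (η : (Fin d → ℤ) → Bool) :
    bondDiff x i (fun ξ => affineFn (plusF Λ) p ξ + ∑ j, g j ξ) η =
      bondDiff x i (fun ξ => affineFn (plusF (Λs k)) p ξ + g k ξ) η := by
  have hxΛ : x ∈ Λ := hcover ▸ Finset.mem_biUnion.2 ⟨k, Finset.mem_univ k, hx⟩
  have hfar : ∀ j ≠ k, bondDiff x i (g j) η = 0 := fun j hjk => by
    have hxj : x ∉ Λs j := Finset.disjoint_left.1 (hdisj hjk.symm) hx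
    rw [bondDiff, (hg j).comp_exchange (fun h => hxj (interiorF_subset _ h))
      (add_unitVec_notMem_interiorF hxj i), sub_self]
  rw [bondDiff_add, bondDiff_add, bondDiff_sum, Finset.sum_eq_single k (fun j _ => hfar j)
    (fun h => absurd (Finset.mem_univ k) h), bondDiff_affineFn p (mem_plusF_of_mem hxΛ)
    (add_unitVec_mem_plusF hxΛ i), bondDiff_affineFn p (mem_plusF_of_mem hx)
    (add_unitVec_mem_plusF hx i)]

theorem dirichletEnergy_glue (hdisj : Pairwise (Disjoint on Λs))
    (hcover : Λ = Finset.univ.biUnion Λs) (g : ι → ((Fin d → ℤ) → Bool) → ℝ)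
    (hg : ∀ k, DependsOn (g k) (interiorF (Λs k))) :
    dirichletEnergy ρ μ c Λ (fun η => affineFn (plusF Λ) p η + ∑ k, g k η) =
      ∑ k, ((Λs k).card / Λ.card : ℝ) *
        dirichletEnergy ρ μ c (Λs k) (fun η => affineFn (plusF (Λs k)) p η + g k η) := by
  classical
  have hsplit : ∀ F : (Fin d → ℤ) → ℝ, ∑ x ∈ Λ, F x = ∑ k, ∑ x ∈ Λs k, F x := fun F => by
    rw [hcover, Finset.sum_biUnion fun j _ k _ hjk => hdisj hjk]
  simp only [dirichletEnergy_eq]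
  rw [hsplit, Finset.mul_sum]
  refine Finset.sum_congr rfl fun k _ => ?_
  rw [← mul_assoc ((Λs k).card / Λ.card : ℝ)]
  rcases (Λs k).eq_empty_or_nonempty with hk | hk
  · simp [hk]
  congr 1
  · have : ((Λs k).card : ℝ) ≠ 0 := by exact_mod_cast hk.card_pos.ne'
    field_simp
  · exact Finset.sum_congr rfl fun x hx => Finset.sum_congr rfl fun i _ => by
      simp_rw [bondDiff_glue hdisj hcover hg hx]

theorem card_eq_sum_card (hdisj : Pairwise (Disjoint on Λs))
    (hcover : Λ = Finset.univ.biUnion Λs) : (Λ.card : ℝ) = ∑ k, ((Λs k).card : ℝ) := by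
  classical
  rw [hcover, Finset.card_biUnion fun j _ k _ hjk => hdisj hjk]
  push_cast
  rfl

theorem nubar_le_sum (hρ : ρ ∈ Set.Icc (0 : ℝ) 1) (hc : ∀ x i η, 0 ≤ c x i η)
    (hdisj : Pairwise (Disjoint on Λs)) (hcover : Λ = Finset.univ.biUnion Λs) :
    nubar ρ μ c Λ p ≤ ∑ k, ((Λs k).card / Λ.card : ℝ) * nubar ρ μ c (Λs k) p := by
  refine le_of_forall_pos_le_add fun ε hε => ?_
  choose g hg hlt using fun k => exists_dirichletEnergy_lt_nubar_add (ρ := ρ) (μ := μ) (c := c)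
    (p := p) (Λs k) hε
  have hglued : DependsOn (fun η => ∑ k, g k η) (interiorF Λ) := fun η η' h =>
    Finset.sum_congr rfl fun k _ => hg k fun x hx => h x <|
      interiorF_mono (hcover ▸ Finset.subset_biUnion_of_mem Λs (Finset.mem_univ k)) hx
  have hweights : ∑ k, ((Λs k).card / Λ.card : ℝ) ≤ 1 := by
    rw [← Finset.sum_div, ← card_eq_sum_card hdisj hcover]
    exact div_self_le_one _
  calc nubar ρ μ c Λ p
      ≤ dirichletEnergy ρ μ c Λ (fun η => affineFn (plusF Λ) p η + ∑ k, g k η) :=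
        nubar_le_dirichletEnergy hρ hc hglued
    _ = ∑ k, ((Λs k).card / Λ.card : ℝ) *
          dirichletEnergy ρ μ c (Λs k) (fun η => affineFn (plusF (Λs k)) p η + g k η) :=
        dirichletEnergy_glue hdisj hcover g hg
    _ ≤ ∑ k, ((Λs k).card / Λ.card : ℝ) * (nubar ρ μ c (Λs k) p + ε) :=
        Finset.sum_le_sum fun k _ => mul_le_mul_of_nonneg_left (hlt k).le (by positivity)
    _ = ∑ k, ((Λs k).card / Λ.card : ℝ) * nubar ρ μ c (Λs k) p +
          (∑ k, ((Λs k).card / Λ.card : ℝ)) * ε := by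
        rw [Finset.sum_mul, ← Finset.sum_add_distrib]
        simp only [mul_add]
    _ ≤ ∑ k, ((Λs k).card / Λ.card : ℝ) * nubar ρ μ c (Λs k) p + ε := by
        gcongr
        exact mul_le_of_le_one_left hε.le hweights

end Gluing

section Translation

open Function

variable {d : ℕ} {ρ : ℝ} {μ : Measure ((Fin d → ℤ) → Bool)}
  {c : (Fin d → ℤ) → Fin d → ((Fin d → ℤ) → Bool) → ℝ} {p : Fin d → ℝ}

theorem shiftEquiv_exchange (z x y : Fin d → ℤ) (η : (Fin d → ℤ) → Bool) :
    shiftEquiv z (exchange (z + x) (z + y) η) = exchange x y (shiftEquiv z η) := by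
  funext w
  simp only [shiftEquiv_apply, exchange, add_right_inj]

theorem bondDiff_comp_shiftEquiv {Λ : Finset (Fin d → ℤ)} {x : Fin d → ℤ} (hx : x ∈ Λ)
    (z : Fin d → ℤ) (i : Fin d) (g : ((Fin d → ℤ) → Bool) → ℝ) (η : (Fin d → ℤ) → Bool) :
    bondDiff (z + x) i
        (fun ξ => affineFn (plusF (Λ.image (z + ·))) p ξ + g (shiftEquiv z ξ)) η =
      bondDiff x i (fun ξ => affineFn (plusF Λ) p ξ + g ξ) (shiftEquiv z η) := by
  have hzx : z + x ∈ Λ.image (z + ·) := Finset.mem_image_of_mem _ hx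
  rw [bondDiff_add, bondDiff_add, bondDiff_affineFn p (mem_plusF_of_mem hzx)
    (add_unitVec_mem_plusF hzx i), bondDiff_affineFn p (mem_plusF_of_mem hx)
    (add_unitVec_mem_plusF hx i), bondDiff, bondDiff, add_assoc, shiftEquiv_exchange]
  rfl

theorem dirichletEnergy_image_add (hμ : IsBernoulliProduct ρ μ)
    (hc_hom : ∀ x i η, c x i η = c 0 i (fun y => η (x + y))) (z : Fin d → ℤ)
    (Λ : Finset (Fin d → ℤ)) (g : ((Fin d → ℤ) → Bool) → ℝ) :
    dirichletEnergy ρ μ c (Λ.image (z + ·))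
        (fun η => affineFn (plusF (Λ.image (z + ·))) p η + g (shiftEquiv z η)) =
      dirichletEnergy ρ μ c Λ (fun η => affineFn (plusF Λ) p η + g η) := by
  have hrate : ∀ x i η, c (z + x) i η = c x i (shiftEquiv z η) := fun x i η => by
    simp only [hc_hom (z + x), hc_hom x, shiftEquiv_apply, add_assoc]
  simp only [dirichletEnergy_eq, Finset.card_image_of_injective _ (add_right_injective z),
    Finset.sum_image fun _ _ _ _ => add_left_cancel]
  congr 1
  refine Finset.sum_congr rfl fun x hx => Finset.sum_congr rfl fun i _ => ?_
  simp only [bondDiff_comp_shiftEquiv hx, hrate]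
  exact (hμ.measurePreserving_shiftEquiv z).integral_comp'
    fun ξ => 1 / 2 * c x i ξ * bondDiff x i (fun ξ => affineFn (plusF Λ) p ξ + g ξ) ξ ^ 2

theorem nubar_image_add_le (hρ : ρ ∈ Set.Icc (0 : ℝ) 1) (hc : ∀ x i η, 0 ≤ c x i η)
    (hμ : IsBernoulliProduct ρ μ) (hc_hom : ∀ x i η, c x i η = c 0 i (fun y => η (x + y)))
    (z : Fin d → ℤ) (Λ : Finset (Fin d → ℤ)) :
    nubar ρ μ c (Λ.image (z + ·)) p ≤ nubar ρ μ c Λ p := by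
  refine le_of_forall_pos_le_add fun ε hε => ?_
  obtain ⟨g, hg, hlt⟩ := exists_dirichletEnergy_lt_nubar_add (ρ := ρ) (μ := μ) (c := c)
    (p := p) Λ hε
  have hshift : DependsOn (fun η => g (shiftEquiv z η)) (interiorF (Λ.image (z + ·))) :=
    fun η η' h => hg fun y hy => h (z + y) (add_mem_interiorF_image hy z)
  calc nubar ρ μ c (Λ.image (z + ·)) p
      ≤ dirichletEnergy ρ μ c (Λ.image (z + ·))
          (fun η => affineFn (plusF (Λ.image (z + ·))) p η + g (shiftEquiv z η)) :=
        nubar_le_dirichletEnergy hρ hc hshift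
    _ = dirichletEnergy ρ μ c Λ (fun η => affineFn (plusF Λ) p η + g η) :=
        dirichletEnergy_image_add hμ hc_hom z Λ g
    _ ≤ nubar ρ μ c Λ p + ε := hlt.le

theorem nubar_image_add (hρ : ρ ∈ Set.Icc (0 : ℝ) 1) (hc : ∀ x i η, 0 ≤ c x i η)
    (hμ : IsBernoulliProduct ρ μ) (hc_hom : ∀ x i η, c x i η = c 0 i (fun y => η (x + y)))
    (z : Fin d → ℤ) (Λ : Finset (Fin d → ℤ)) :
    nubar ρ μ c (Λ.image (z + ·)) p = nubar ρ μ c Λ p := by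
  refine (nubar_image_add_le hρ hc hμ hc_hom z Λ).antisymm ?_
  simpa only [Finset.image_image, Function.comp_def, neg_add_cancel_left, Finset.image_id'] using
    nubar_image_add_le (p := p) hρ hc hμ hc_hom (-z) (Λ.image (z + ·))

theorem nubar_le_of_eq_biUnion_image_add (hρ : ρ ∈ Set.Icc (0 : ℝ) 1)
    (hc : ∀ x i η, 0 ≤ c x i η) (hμ : IsBernoulliProduct ρ μ)
    (hc_hom : ∀ x i η, c x i η = c 0 i (fun y => η (x + y))) {ι : Type*} [Fintype ι]
    {Λ Λ' : Finset (Fin d → ℤ)} (hne : Λ.Nonempty) {z : ι → Fin d → ℤ}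
    (hdisj : Pairwise (Disjoint on fun k => Λ'.image (z k + ·)))
    (hcover : Λ = Finset.univ.biUnion fun k => Λ'.image (z k + ·)) :
    nubar ρ μ c Λ p ≤ nubar ρ μ c Λ' p :=
  calc nubar ρ μ c Λ p
      ≤ ∑ k, ((Λ'.image (z k + ·)).card / Λ.card : ℝ) * nubar ρ μ c (Λ'.image (z k + ·)) p :=
        nubar_le_sum hρ hc hdisj hcover
    _ = (∑ k, ((Λ'.image (z k + ·)).card : ℝ)) / Λ.card * nubar ρ μ c Λ' p := by
        simp only [nubar_image_add hρ hc hμ hc_hom, Finset.sum_div, Finset.sum_mul]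
    _ = nubar ρ μ c Λ' p := by
        rw [← card_eq_sum_card hdisj hcover, div_self (by exact_mod_cast hne.card_pos.ne'),
          one_mul]

end Translation

section TriadicCubes

open Function

variable {d : ℕ}

theorem mem_triadicCubeF {n : ℕ} {x : Fin d → ℤ} :
    x ∈ triadicCubeF d n ↔ ∀ j, -(3 ^ n : ℤ) < 2 * x j ∧ 2 * x j < 3 ^ n := by
  have : (0 : ℤ) < 3 ^ n := by positivity
  simp only [triadicCubeF, Fintype.mem_piFinset, Finset.mem_filter, Finset.mem_Icc]
  exact forall_congr' fun j => ⟨And.right, fun h => ⟨⟨by omega, by omega⟩, h⟩⟩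

theorem zero_mem_triadicCubeF (n : ℕ) : 0 ∈ triadicCubeF d n :=
  mem_triadicCubeF.2 fun _ => by simp [pow_pos]

def ternaryDigit (P k : ℤ) : Fin 3 :=
  if 2 * k < -P then 0 else if 2 * k < P then 1 else 2

theorem ternaryDigit_mul_add {P a : ℤ} (ha : -P < 2 * a ∧ 2 * a < P) (t : Fin 3) :
    ternaryDigit P (P * ((t : ℤ) - 1) + a) = t := by
  have ht : (t : ℤ) = 0 ∨ (t : ℤ) = 1 ∨ (t : ℤ) = 2 := by omega
  unfold ternaryDigit
  rcases ht with ht | ht | ht <;> rw [ht] <;> split_ifs <;> omega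

theorem sub_mul_ternaryDigit {P k : ℤ} (hP : Odd P) (hk : -(3 * P) < 2 * k ∧ 2 * k < 3 * P) :
    -P < 2 * (k - P * ((ternaryDigit P k : ℤ) - 1)) ∧
      2 * (k - P * ((ternaryDigit P k : ℤ) - 1)) < P := by
  obtain ⟨m, rfl⟩ := hP
  unfold ternaryDigit
  split_ifs <;> simp only [Fin.isValue, Fin.val_zero, Fin.val_one, Fin.val_two] <;> omega

def tileOffset (n : ℕ) (w : Fin d → Fin 3) : Fin d → ℤ :=
  fun j => 3 ^ n * ((w j : ℤ) - 1)

theorem triadicCubeF_succ_eq_biUnion (n : ℕ) :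
    triadicCubeF d (n + 1) =
      Finset.univ.biUnion fun w => (triadicCubeF d n).image (tileOffset n w + ·) := by
  ext x
  simp only [Finset.mem_biUnion, Finset.mem_univ, true_and, Finset.mem_image, mem_triadicCubeF,
    pow_succ']
  constructor
  · intro hx
    exact ⟨fun j => ternaryDigit (3 ^ n) (x j), x - tileOffset n _,
      fun j => sub_mul_ternaryDigit (Odd.pow (by decide)) (hx j), add_sub_cancel _ _⟩
  · rintro ⟨w, a, ha, rfl⟩ j
    have := ha j
    simp only [Pi.add_apply, tileOffset]
    have hw : (w j : ℤ) = 0 ∨ (w j : ℤ) = 1 ∨ (w j : ℤ) = 2 := by omega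
    rcases hw with hw | hw | hw <;> rw [hw] <;> omega

theorem pairwise_disjoint_image_tileOffset (n : ℕ) :
    Pairwise (Disjoint on fun w => (triadicCubeF d n).image (tileOffset n w + ·)) := by
  intro w w' hne
  refine Finset.disjoint_left.2 ?_
  simp only [Finset.mem_image, mem_triadicCubeF]
  rintro _ ⟨a, ha, rfl⟩ ⟨b, hb, hab⟩
  refine hne (funext fun j => ?_)
  rw [← ternaryDigit_mul_add (ha j) (w j), ← ternaryDigit_mul_add (hb j) (w' j)]
  exact congrArg _ (congrFun hab j).symm

end TriadicCubes

theorem nubar_subadditive_general {d : ℕ} (ρ lam : ℝ) (hρ : ρ ∈ Set.Ioo (0 : ℝ) 1)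
    (μ : Measure ((Fin d → ℤ) → Bool)) (hμ : IsBernoulliProduct ρ μ)
    (c : (Fin d → ℤ) → Fin d → ((Fin d → ℤ) → Bool) → ℝ)
    (hc_bdd : ∀ x i η, 1 ≤ c x i η ∧ c x i η ≤ lam)
    (hc_hom : ∀ (x : Fin d → ℤ) (i : Fin d) (η : (Fin d → ℤ) → Bool),
      c x i η = c 0 i (fun y => η (x + y)))
    (Λ : Finset (Fin d → ℤ)) (m : ℕ) (Λs : Fin m → Finset (Fin d → ℤ))
    (hdisj : Pairwise fun i j => Disjoint (Λs i) (Λs j))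
    (hcover : Λ = Finset.univ.biUnion Λs) (p : Fin d → ℝ) :
    nubar ρ μ c Λ p ≤
        ∑ i : Fin m, (((Λs i).card : ℝ) / (Λ.card : ℝ)) * nubar ρ μ c (Λs i) p ∧
      ∀ n : ℕ, nubar ρ μ c (triadicCubeF d (n + 1)) p ≤ nubar ρ μ c (triadicCubeF d n) p := by
  have hρ' : ρ ∈ Set.Icc (0 : ℝ) 1 := Set.Ioo_subset_Icc_self hρ
  have hc : ∀ x i η, 0 ≤ c x i η := fun x i η => zero_le_one.trans (hc_bdd x i η).1
  refine ⟨nubar_le_sum hρ' hc hdisj hcover, fun n => ?_⟩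
  exact nubar_le_of_eq_biUnion_image_add hρ' hc hμ hc_hom ⟨0, zero_mem_triadicCubeF (n + 1)⟩
    (pairwise_disjoint_image_tileOffset n) (triadicCubeF_succ_eq_biUnion n)

/-- Proposition 4.1 (4), subadditivity of the finite-volume conductivity functional:
for every partition `Λ = Λ_1 ⊔ ⋯ ⊔ Λ_m`,
`ν̄(ρ,Λ,p) ≤ Σᵢ (|Λᵢ|/|Λ|) ν̄(ρ,Λᵢ,p)`; in particular (using the spatial homogeneity of
the rates), `n ↦ ν̄(ρ,□_n,p)` is nonincreasing along triadic cubes. -/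
theorem nubar_subadditive {d : ℕ} (ρ lam : ℝ) (hρ : ρ ∈ Set.Ioo (0 : ℝ) 1)
    (hlam : 1 ≤ lam)
    (μ : Measure ((Fin d → ℤ) → Bool)) (hμ : IsBernoulliProduct ρ μ)
    (c : (Fin d → ℤ) → Fin d → ((Fin d → ℤ) → Bool) → ℝ)
    (hc_meas : ∀ x i, Measurable (c x i))
    (hc_bdd : ∀ x i η, 1 ≤ c x i η ∧ c x i η ≤ lam)
    (hc_hom : ∀ (x : Fin d → ℤ) (i : Fin d) (η : (Fin d → ℤ) → Bool),
      c x i η = c 0 i (fun y => η (x + y)))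
    (Λ : Finset (Fin d → ℤ)) (m : ℕ) (Λs : Fin m → Finset (Fin d → ℤ))
    (hdisj : Pairwise fun i j => Disjoint (Λs i) (Λs j))
    (hcover : Λ = Finset.univ.biUnion Λs) (p : Fin d → ℝ) :
    nubar ρ μ c Λ p ≤
        ∑ i : Fin m, (((Λs i).card : ℝ) / (Λ.card : ℝ)) * nubar ρ μ c (Λs i) p ∧
      ∀ n : ℕ, nubar ρ μ c (triadicCubeF d (n + 1)) p ≤ nubar ρ μ c (triadicCubeF d n) p :=
  nubar_subadditive_general ρ lam hρ μ hμ c hc_bdd hc_hom Λ m Λs hdisj hcover p
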